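/- Let M be a binary matroid and let X be an independent set in M with |X| ≥ 2. If x and y are two distinct elements of X, then x and y lie in the same component of the Γ-extension matroid M^X; consequently, any two components of M that each contain an element of X are contained in a single component of M^X. -/

import Mathlib

open Set
open scoped Classical

/-- A circuit of a matroid: a minimal dependent set. -/
def MatroidCircuit {α : Type*} (M : Matroid α) (C : Set α) : Prop :=
  M.Dep C ∧ ∀ D ⊂ C, ¬ M.Dep D

/-- A cocircuit of a matroid: a circuit of the dual matroid. -/
def MatroidCocircuit {α : Type*} (M : Matroid α) (C : Set α) : Prop :=
  MatroidCircuit M✶ C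

/-- The rank of a set in a matroid, as an extended natural number: the supremum of the
cardinalities of independent subsets of the set. -/
noncomputable def matroidERk {α : Type*} (M : Matroid α) (A : Set α) : ℕ∞ :=
  ⨆ I : {I : Set α // M.Indep I ∧ I ⊆ A}, (I : Set α).encard

/-- The rank of a matroid. -/
noncomputable def matroidERank {α : Type*} (M : Matroid α) : ℕ∞ :=
  matroidERk M M.E

/-- Deletion of a set from a matroid: the restriction to the complement. -/
def matroidDelete {α : Type*} (M : Matroid α) (Y : Set α) : Matroid α :=
  M.restrict (M.E \ Y)

/-- A `k`-separation of a matroid `M`: a partition of the ground set into disjoint sets `A`, `B`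
with `min (|A|, |B|) ≥ k` and `r(A) + r(B) - r(M) ≤ k - 1`. -/
def KSeparation {α : Type*} (M : Matroid α) (k : ℕ) (A B : Set α) : Prop :=
  Disjoint A B ∧ A ∪ B = M.E ∧ (k : ℕ∞) ≤ A.encard ∧ (k : ℕ∞) ≤ B.encard ∧
    matroidERk M A + matroidERk M B ≤ matroidERank M + ((k : ℕ∞) - 1)

/-- For `k ≥ 2`, a matroid is `k`-connected if it has no `(k-1)`-separation. -/
def KConnected {α : Type*} (M : Matroid α) (k : ℕ) : Prop :=
  ∀ A B : Set α, ¬ KSeparation M (k - 1) A B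

/-- The relation `e ~ f` iff `e = f` or some circuit contains both `e` and `f`. -/
def ConnRel {α : Type*} (M : Matroid α) (e f : α) : Prop :=
  e = f ∨ ∃ C, MatroidCircuit M C ∧ e ∈ C ∧ f ∈ C

/-- A component of a matroid: an equivalence class of the relation `ConnRel` on the
ground set. -/
def MatroidComponent {α : Type*} (M : Matroid α) (D : Set α) : Prop :=
  ∃ e ∈ M.E, D = {f ∈ M.E | ConnRel M e f}

/-- A matroid is connected if it has exactly one component. -/
def MatroidConnected {α : Type*} (M : Matroid α) : Prop :=
  ∃! D : Set α, MatroidComponent M D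

/-- `M` is the vector matroid over GF(2) of the matrix with column set `S` whose column at
`e ∈ S` is `A e`: a set is independent iff it is a subset of `S` whose columns are linearly
independent over GF(2). -/
def IsBinaryRep {α ρ : Type*} (M : Matroid α) (S : Set α) (A : α → ρ → ZMod 2) : Prop :=
  M.E = S ∧ ∀ I : Set α, M.Indep I ↔ I ⊆ S ∧ LinearIndependent (ZMod 2) (fun e : I => A e.1)

/-- The columns of the matrix `A^X` of the Γ-extension: for each index `i`, the new column
labelled `g i` agrees with the column of `x i` in the old rows and has entry `1` in the new
row (indexed by `none`), while every old column keeps its entries in the old rows and has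
entry `0` in the new row. -/
noncomputable def gammaCols {α ρ ι : Type*} (A : α → ρ → ZMod 2) (x g : ι → α) :
    α → Option ρ → ZMod 2 := fun e o =>
  if h : ∃ i, g i = e then o.elim 1 (fun r => A (x h.choose) r)
  else o.elim 0 (fun r => A e r)

/-!
In `M^X` the columns of `x_i, γ_i, x_j, γ_j` sum to zero, and since the columns of `x_i` and
`x_j` are independent in `M`, every linear relation supported on these four columns is
constant; so `{x_i, γ_i, x_j, γ_j}` is a circuit of `M^X`. Deleting `Γ` from `M^X` gives back `M`,
so every circuit of `M` is a circuit of `M^X`. Finally, lying on a common circuit is transitive in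
any finitary matroid (strong circuit elimination and induction on `|C₁ ∪ C₂|`), which turns these
two facts into statements about components.
-/

lemma matroidCircuit_iff_isCircuit {α : Type*} {M : Matroid α} {C : Set α} :
    MatroidCircuit M C ↔ M.IsCircuit C := by
  rw [Matroid.isCircuit_iff_forall_ssubset]
  exact and_congr_right fun hC =>
    forall₂_congr fun _ hD => Matroid.not_dep_iff (hD.subset.trans hC.subset_ground)

namespace Matroid

variable {α : Type*} {M : Matroid α} {C₁ C₂ : Set α} {e g : α}

theorem IsCircuit.exists_isCircuit_mem_of_inter_nonempty [M.Finitary] (hC₁ : M.IsCircuit C₁)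
    (hC₂ : M.IsCircuit C₂) (hne : (C₁ ∩ C₂).Nonempty) (he : e ∈ C₁) (hg : g ∈ C₂) :
    ∃ C, M.IsCircuit C ∧ e ∈ C ∧ g ∈ C := by
  induction hn : (C₁ ∪ C₂).ncard using Nat.strong_induction_on generalizing C₁ C₂ with
  | _ n ih =>
  subst hn
  by_cases hg₁ : g ∈ C₁
  · exact ⟨C₁, hC₁, he, hg₁⟩
  by_cases he₂ : e ∈ C₂
  · exact ⟨C₂, hC₂, he₂, hg⟩
  obtain ⟨f, hf₁, hf₂⟩ := hne
  have hfin : (C₁ ∪ C₂).Finite := hC₁.finite.union hC₂.finite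
  obtain ⟨C₃, hC₃sub, hC₃, heC₃⟩ := hC₁.strong_elimination hC₂ hf₁ hf₂ he he₂
  obtain ⟨C₄, hC₄sub, hC₄, hgC₄⟩ := hC₂.strong_elimination hC₁ hf₂ hf₁ hg hg₁
  rw [union_comm C₂] at hC₄sub
  -- Neither `C₃ ⊆ C₁` nor `C₄ ⊆ C₂`, since `f` lies in `C₁ ∩ C₂` but not in `C₃ ∪ C₄`.
  have hC₃₂ : (C₃ ∩ C₂).Nonempty := by
    obtain ⟨y, hy₃, hy₁⟩ :=
      not_subset.1 fun h => (hC₃sub (hC₃.eq_of_subset_isCircuit hC₁ h ▸ hf₁)).2 rfl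
    exact ⟨y, hy₃, (hC₃sub hy₃).1.resolve_left hy₁⟩
  obtain ⟨h, hh₄, hh₂⟩ :=
    not_subset.1 fun h => (hC₄sub (hC₄.eq_of_subset_isCircuit hC₂ h ▸ hf₂)).2 rfl
  have hh₁ : h ∈ C₁ := (hC₄sub hh₄).1.resolve_right hh₂
  by_cases hh₃ : h ∈ C₃
  · refine ih _ (ncard_lt_ncard ?_ hfin) hC₃ hC₄ ⟨h, hh₃, hh₄⟩ heC₃ hgC₄ rfl
    exact (union_subset hC₃sub hC₄sub).trans_ssubset
      (sdiff_singleton_ssubset.2 (Or.inl hf₁))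
  · refine ih _ (ncard_lt_ncard ?_ hfin) hC₃ hC₂ hC₃₂ heC₃ hg rfl
    refine (ssubset_iff_of_subset (union_subset (hC₃sub.trans sdiff_subset)
      subset_union_right)).2 ⟨h, Or.inl hh₁, ?_⟩
    rintro (h₃ | h₂)
    exacts [hh₃ h₃, hh₂ h₂]

end Matroid

section ConnRel

variable {α : Type*} {M : Matroid α} {e f g : α}

theorem ConnRel.symm (h : ConnRel M e f) : ConnRel M f e := by
  rcases h with rfl | ⟨C, hC, he, hf⟩
  exacts [Or.inl rfl, Or.inr ⟨C, hC, hf, he⟩]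

theorem ConnRel.trans [M.Finitary] (h₁ : ConnRel M e f) (h₂ : ConnRel M f g) :
    ConnRel M e g := by
  rcases h₁ with rfl | ⟨C₁, hC₁, he, hf₁⟩
  · exact h₂
  rcases h₂ with rfl | ⟨C₂, hC₂, hf₂, hg⟩
  · exact Or.inr ⟨C₁, hC₁, he, hf₁⟩
  rw [matroidCircuit_iff_isCircuit] at hC₁ hC₂
  obtain ⟨C, hC, heC, hgC⟩ :=
    hC₁.exists_isCircuit_mem_of_inter_nonempty hC₂ ⟨f, hf₁, hf₂⟩ he hg
  exact Or.inr ⟨C, matroidCircuit_iff_isCircuit.2 hC, heC, hgC⟩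

theorem ConnRel.of_restrict {R : Set α} (h : ConnRel (M.restrict R) e f) (hR : R ⊆ M.E) :
    ConnRel M e f := by
  rcases h with rfl | ⟨C, hC, he, hf⟩
  · exact Or.inl rfl
  rw [matroidCircuit_iff_isCircuit, Matroid.restrict_isCircuit_iff hR] at hC
  exact Or.inr ⟨C, matroidCircuit_iff_isCircuit.2 hC.1, he, hf⟩

end ConnRel

def IsVectorRep {α W : Type*} (R : Type*) [Semiring R] [AddCommMonoid W] [Module R W]
    (M : Matroid α) (S : Set α) (v : α → W) : Prop :=
  M.E = S ∧ ∀ I : Set α, M.Indep I ↔ I ⊆ S ∧ LinearIndepOn R v I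

theorem IsBinaryRep.isVectorRep {α ρ : Type*} {M : Matroid α} {S : Set α} {A : α → ρ → ZMod 2}
    (h : IsBinaryRep M S A) : IsVectorRep (ZMod 2) M S A :=
  h

namespace IsVectorRep

variable {α R W : Type*} [Ring R] [AddCommGroup W] [Module R W] {M : Matroid α} {S : Set α}
  {v : α → W}

theorem finitary (h : IsVectorRep R M S v) : M.Finitary where
  indep_of_forall_finite I hI := (h.2 I).2
    ⟨fun e he => ((h.2 _).1 (hI {e} (singleton_subset_iff.2 he) (finite_singleton e))).1 rfl,
      linearIndepOn_iff_linearIndepOn_finset.2 fun t ht => ((h.2 t).1 (hI t ht t.finite_toSet)).2⟩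

theorem isCircuit_of_relation (h : IsVectorRep R M S v) {Q : Finset α} (hQS : ↑Q ⊆ S)
    (c : α → R) (hc : ∃ q ∈ Q, c q ≠ 0) (hcQ : ∑ q ∈ Q, c q • v q = 0)
    (hrel : ∀ l : α → R, ∑ q ∈ Q, l q • v q = 0 → ∀ p ∈ Q, l p = 0 → ∀ q ∈ Q, l q = 0) :
    M.IsCircuit Q := by
  rw [Matroid.isCircuit_iff_forall_ssubset]
  refine ⟨⟨fun hQ => ?_, h.1 ▸ hQS⟩, fun I hIQ => (h.2 I).2 ⟨hIQ.subset.trans hQS, ?_⟩⟩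
  · obtain ⟨q, hq, hcq⟩ := hc
    exact hcq (linearIndepOn_iff'.1 ((h.2 _).1 hQ).2 Q c subset_rfl hcQ q hq)
  · obtain ⟨p, hpQ, hpI⟩ := exists_of_ssubset hIQ
    refine linearIndepOn_iff''.2 fun t l htI hlt hl i hi => ?_
    have htQ : t ⊆ Q := fun a ha => hIQ.subset (htI ha)
    have hlQ : ∑ q ∈ Q, l q • v q = 0 := by
      rw [← Finset.sum_subset htQ fun a _ ha => by rw [hlt a ha, zero_smul], hl]
    exact hrel l hlQ p hpQ (hlt p fun hp => hpI (htI hp)) i (htQ hi)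

end IsVectorRep

section GammaExtension

variable {α ρ ι : Type*} {M MX : Matroid α} {S : Set α} {A : α → ρ → ZMod 2} {x g : ι → α}

theorem gammaCols_of_notMem_range {e : α} (he : e ∉ range g) :
    gammaCols A x g e = fun o => o.elim 0 (A e) := by
  funext o
  exact dif_neg (show ¬∃ i, g i = e from he)

theorem gammaCols_apply_self (hg : Function.Injective g) (i : ι) :
    gammaCols A x g (g i) = fun o => o.elim 1 (A (x i)) := by
  have hex : ∃ k, g k = g i := ⟨i, rfl⟩
  funext o
  simp only [gammaCols, dif_pos hex, hg hex.choose_spec]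

theorem restrict_eq_of_isBinaryRep_gammaCols (hdisj : Disjoint S (range g))
    (hM : IsBinaryRep M S A) (hMX : IsBinaryRep MX (S ∪ range g) (gammaCols A x g)) :
    MX.restrict S = M := by
  refine Matroid.ext_indep (by rw [Matroid.restrict_ground_eq, hM.1]) fun I (hIS : I ⊆ S) => ?_
  have hcols : EqOn (gammaCols A x g) (Function.ExtendByZero.linearMap (ZMod 2) some ∘ A) I := by
    intro e he
    rw [gammaCols_of_notMem_range (disjoint_left.1 hdisj (hIS he))]
    funext o
    cases o with
    | none => simp
    | some r => simp [(Option.some_injective ρ).extend_apply]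
  rw [Matroid.restrict_indep_iff, hMX.isVectorRep.2, hM.isVectorRep.2, linearIndepOn_congr hcols,
    LinearMap.linearIndepOn_iff_of_injOn _
      (Function.extend_injective (Option.some_injective ρ) (0 : Option ρ → ZMod 2)).injOn]
  exact ⟨fun h => ⟨h.2, h.1.2⟩, fun h => ⟨⟨subset_union_left.trans' h.1, h.2⟩, h.1⟩⟩

theorem isCircuit_gammaCols_quad (hxinj : Function.Injective x) (hginj : Function.Injective g)
    (hxS : range x ⊆ S) (hdisj : Disjoint S (range g)) (hXindep : M.Indep (range x))
    (hM : IsBinaryRep M S A) (hMX : IsBinaryRep MX (S ∪ range g) (gammaCols A x g))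
    {i j : ι} (hij : i ≠ j) :
    MX.IsCircuit {x i, g i, x j, g j} := by
  have hxg : ∀ k l, x k ≠ g l := fun k l h => disjoint_left.1 hdisj (hxS ⟨k, rfl⟩) ⟨l, h.symm⟩
  have hxx : x i ≠ x j := hxinj.ne hij
  have hgg : g i ≠ g j := hginj.ne hij
  have hγx (k : ι) : gammaCols A x g (x k) = fun o => o.elim 0 (A (x k)) :=
    gammaCols_of_notMem_range (disjoint_left.1 hdisj (hxS ⟨k, rfl⟩))
  have hγg (k : ι) : gammaCols A x g (g k) = fun o => o.elim 1 (A (x k)) :=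
    gammaCols_apply_self hginj k
  have hsum (l : α → ZMod 2) : ∑ q ∈ ({x i, g i, x j, g j} : Finset α), l q • gammaCols A x g q =
      l (x i) • gammaCols A x g (x i) + l (g i) • gammaCols A x g (g i) +
        (l (x j) • gammaCols A x g (x j) + l (g j) • gammaCols A x g (g j)) := by
    rw [Finset.sum_insert (by simp [hxg, hxx]), Finset.sum_insert (by simp [(hxg j i).symm, hgg]),
      Finset.sum_pair (hxg j j), add_assoc]
  have hpair := (LinearIndepOn.pair_iff A hxx).1
    (((hM.isVectorRep.2 _).1 hXindep).2.mono (pair_subset ⟨i, rfl⟩ ⟨j, rfl⟩))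
  have hrel (l : α → ZMod 2)
      (hl : ∑ q ∈ ({x i, g i, x j, g j} : Finset α), l q • gammaCols A x g q = 0) :
      l (x i) = l (g i) ∧ l (g i) = l (g j) ∧ l (x j) = l (g j) := by
    rw [hsum, hγx, hγx, hγg, hγg] at hl
    have hnone : l (g i) + l (g j) = 0 := by simpa using congrFun hl none
    obtain ⟨hi, hj⟩ := hpair (l (x i) + l (g i)) (l (x j) + l (g j)) <| funext fun r => by
      have := congrFun hl (some r)
      simp only [Pi.add_apply, Pi.smul_apply, Option.elim_some, smul_eq_mul] at this ⊢
      linear_combination this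
    exact ⟨CharTwo.add_eq_zero.1 hi, CharTwo.add_eq_zero.1 hnone, CharTwo.add_eq_zero.1 hj⟩
  have hQS : ↑({x i, g i, x j, g j} : Finset α) ⊆ S ∪ range g := by
    simp [insert_subset_iff, hxS ⟨i, rfl⟩, hxS ⟨j, rfl⟩]
  have hone :
      ∑ q ∈ ({x i, g i, x j, g j} : Finset α), (1 : α → ZMod 2) q • gammaCols A x g q = 0 := by
    rw [hsum, hγx, hγx, hγg, hγg]
    funext o
    cases o <;> simp [CharTwo.add_self_eq_zero]
  have hQ := hMX.isVectorRep.isCircuit_of_relation hQS 1 ⟨x i, by simp, one_ne_zero⟩ hone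
    fun l hl p hp hlp q hq => by
      have hconst : ∀ q ∈ ({x i, g i, x j, g j} : Finset α), l q = l (g i) := by
        obtain ⟨h₁, h₂, h₃⟩ := hrel l hl
        simp only [Finset.mem_insert, Finset.mem_singleton]
        rintro q (rfl | rfl | rfl | rfl) <;> simp [h₁, h₂, h₃]
      rw [hconst q hq, ← hconst p hp, hlp]
  simpa using hQ

end GammaExtension

theorem stmt_17_general {α ρ ι : Type*}
    (M MX : Matroid α) (S : Set α) (A : α → ρ → ZMod 2) (x g : ι → α)
    (hxinj : Function.Injective x) (hginj : Function.Injective g)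
    (hxS : Set.range x ⊆ S) (hdisj : Disjoint S (Set.range g))
    (hXindep : M.Indep (Set.range x))
    (hM : IsBinaryRep M S A)
    (hMX : IsBinaryRep MX (S ∪ Set.range g) (gammaCols A x g)) :
    (∀ a b : α, a ∈ Set.range x → b ∈ Set.range x → a ≠ b →
      ∃ D : Set α, MatroidComponent MX D ∧ a ∈ D ∧ b ∈ D) ∧
      (∀ D₁ D₂ : Set α, MatroidComponent M D₁ → MatroidComponent M D₂ →
        (D₁ ∩ Set.range x).Nonempty → (D₂ ∩ Set.range x).Nonempty →
        ∃ D : Set α, MatroidComponent MX D ∧ D₁ ⊆ D ∧ D₂ ⊆ D) := by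
  have := hMX.isVectorRep.finitary
  have hSE : S ⊆ MX.E := hMX.1 ▸ subset_union_left
  have hxE (i : ι) : x i ∈ MX.E := hSE (hxS ⟨i, rfl⟩)
  have hconn (i j : ι) : ConnRel MX (x i) (x j) := by
    obtain rfl | hij := eq_or_ne i j
    · exact Or.inl rfl
    exact Or.inr ⟨_, matroidCircuit_iff_isCircuit.2
      (isCircuit_gammaCols_quad hxinj hginj hxS hdisj hXindep hM hMX hij), by simp, by simp⟩
  have hlift {e f : α} (h : ConnRel M e f) : ConnRel MX e f :=
    (restrict_eq_of_isBinaryRep_gammaCols hdisj hM hMX ▸ h).of_restrict hSE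
  have hMS : M.E = S := hM.1
  refine ⟨?_, ?_⟩
  · rintro _ _ ⟨i, rfl⟩ ⟨j, rfl⟩ -
    exact ⟨_, ⟨x i, hxE i, rfl⟩, ⟨hxE i, Or.inl rfl⟩, hxE j, hconn i j⟩
  · rintro D₁ D₂ ⟨e₁, -, rfl⟩ ⟨e₂, -, rfl⟩ ⟨-, ⟨-, h₁⟩, i, rfl⟩ ⟨-, ⟨-, h₂⟩, j, rfl⟩
    refine ⟨_, ⟨x i, hxE i, rfl⟩, ?_, ?_⟩ <;> rintro f ⟨hf, h⟩ <;> refine ⟨hSE (hMS ▸ hf), ?_⟩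
    · exact (hlift h₁).symm.trans (hlift h)
    · exact (hconn i j).trans ((hlift h₂).symm.trans (hlift h))

/-- If `|X| ≥ 2` and `a`, `b` are distinct elements of `X = range x`, then `a` and `b` lie
in the same component of the Γ-extension `M^X`; consequently, any two components of `M` each
meeting `X` are contained in a single component of `M^X`. -/
theorem stmt_17 {α ρ ι : Type*} [Fintype ι] [Nonempty ι]
    (M MX : Matroid α) (S : Set α) (A : α → ρ → ZMod 2) (x g : ι → α)
    (hxinj : Function.Injective x) (hginj : Function.Injective g)
    (hxS : Set.range x ⊆ S) (hdisj : Disjoint S (Set.range g))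
    (hXindep : M.Indep (Set.range x))
    (hM : IsBinaryRep M S A)
    (hMX : IsBinaryRep MX (S ∪ Set.range g) (gammaCols A x g))
    (hX2 : 2 ≤ Fintype.card ι) :
    (∀ a b : α, a ∈ Set.range x → b ∈ Set.range x → a ≠ b →
      ∃ D : Set α, MatroidComponent MX D ∧ a ∈ D ∧ b ∈ D) ∧
      (∀ D₁ D₂ : Set α, MatroidComponent M D₁ → MatroidComponent M D₂ →
        (D₁ ∩ Set.range x).Nonempty → (D₂ ∩ Set.range x).Nonempty →
        ∃ D : Set α, MatroidComponent MX D ∧ D₁ ⊆ D ∧ D₂ ⊆ D) :=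
  stmt_17_general M MX S A x g hxinj hginj hxS hdisj hXindep hM hMX
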